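/- Let Δ be of type B, C, F₄, or G₂ with highest root θ, ⌊θ/2⌋ = Σ_α ⌊ht_α(θ)/2⌋ α and ⌈θ/2⌉ = θ − ⌊θ/2⌋. Then the interval {γ ∈ Δ⁺ : ⌊θ/2⌋ ≼ γ ≼ ⌈θ/2⌉} equals exactly {⌊θ/2⌋, ⌈θ/2⌉}, and ht(⌈θ/2⌉) = h/2 where h is the Coxeter number. -/

import Mathlib

/-!
In a non-simply-laced system the highest root `θ` is long, and a short root `σ` of maximal
height pairs positively with `θ`; its Cartan integers force `θ - 2σ` to be plus or minus a
root, which writes `θ = 2β + γ` with `β`, `γ` positive roots. For any such splitting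
`⟪θ, γ⟫ = 0`, so some simple `α` has `⟪β, α⟫ < 0 < ⟪γ, α⟫`, and then `θ = 2(β + α) + (γ - 2α)`
is a splitting with `γ` replaced by a root of smaller height. A splitting of minimal height
thus has `γ = α` simple: `θ = 2β + α`, so `⌊θ/2⌋ = β`, `⌈θ/2⌉ = β + α` is a root, the interval
between them is `{β, β + α}`, and `ht θ = 2 ht β + 1`.
-/

open scoped RealInnerProductSpace

/-- Combinatorial data of the set of positive roots of a (reduced, irreducible,
crystallographic) root system of a simple Lie algebra, with a chosen set of
simple roots, sitting in a real inner product space `V`. -/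
structure SimpleRS (V : Type*) [NormedAddCommGroup V] [InnerProductSpace ℝ V] where
  /-- the positive roots Δ⁺ -/
  pos : Finset V
  /-- the simple roots Π -/
  simple : Finset V
  simple_sub : simple ⊆ pos
  indep : LinearIndependent ℝ (fun α : {x // x ∈ simple} => (α : V))
  root_ne : ∀ γ ∈ pos, γ ≠ (0 : V)
  /-- `coeff γ α` is the coefficient of the simple root `α` in `γ` -/
  coeff : V → V → ℕ
  coeff_spec : ∀ γ ∈ pos, γ = ∑ α ∈ simple, (coeff γ α : ℝ) • α
  /-- the reflection of a root in a root is again a root (positive or negative) -/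
  reflect_mem : ∀ α ∈ pos, ∀ γ ∈ pos,
    (γ - (2 * ⟪γ, α⟫ / ⟪α, α⟫) • α ∈ pos ∨ -(γ - (2 * ⟪γ, α⟫ / ⟪α, α⟫) • α) ∈ pos)
  crystallographic : ∀ α ∈ pos, ∀ γ ∈ pos, ∃ z : ℤ, 2 * ⟪γ, α⟫ / ⟪α, α⟫ = (z : ℝ)
  reduced : ∀ α ∈ pos, (2 : ℝ) • α ∉ pos
  /-- irreducibility: the Dynkin diagram is connected -/
  irreducible : ∀ S ⊆ simple, (∀ α ∈ S, ∀ β ∈ simple, β ∉ S → ⟪α, β⟫ = 0) →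
      S = ∅ ∨ S = simple
  /-- the highest root θ -/
  highest : V
  highest_mem : highest ∈ pos
  highest_spec : ∀ γ ∈ pos, ∃ c : V → ℕ, highest - γ = ∑ α ∈ simple, (c α : ℝ) • α

namespace SimpleRS

variable {V : Type*} [NormedAddCommGroup V] [InnerProductSpace ℝ V] (R : SimpleRS V)

/-- the root order: `μ ≼ ν` iff `ν − μ` is a nonnegative integral combination
of simple roots -/
def rle (μ ν : V) : Prop := ∃ c : V → ℕ, ν - μ = ∑ α ∈ R.simple, (c α : ℝ) • α

/-- the support of a root: simple roots occurring with nonzero coefficient -/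
def supp (γ : V) : Set V := {α | α ∈ R.simple ∧ R.coeff γ α ≠ 0}

/-- the height of a root -/
def ht (γ : V) : ℕ := ∑ α ∈ R.simple, R.coeff γ α

/-- the root system is of type `A_n`: its Dynkin diagram is a simply laced chain -/
def IsTypeA : Prop :=
  ∃ (n : ℕ) (e : Fin n ≃ {x // x ∈ R.simple}),
    (∀ i j : Fin n, ⟪(e i : V), (e j : V)⟫ ≠ 0 ↔ ((i : ℤ) - (j : ℤ)).natAbs ≤ 1) ∧
    (∀ i j : Fin n, ‖(e i : V)‖ = ‖(e j : V)‖)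

/-- all roots have the same length -/
def SimplyLaced : Prop := ∀ α ∈ R.pos, ∀ β ∈ R.pos, ‖α‖ = ‖β‖

/-- a positive root `γ` is commutative if the upper ideal it generates is abelian,
i.e. no two of its elements sum to a root -/
def IsCom (γ : V) : Prop :=
  ∀ ν₁ ∈ R.pos, ∀ ν₂ ∈ R.pos, R.rle γ ν₁ → R.rle γ ν₂ →
    ν₁ + ν₂ ∉ R.pos ∧ -(ν₁ + ν₂) ∉ R.pos

/-- the coefficientwise floor `⌊θ/2⌋` of half the highest root -/
def floorTheta : V := ∑ α ∈ R.simple, ((R.coeff R.highest α / 2 : ℕ) : ℝ) • α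

end SimpleRS

namespace SimpleRS

variable {V : Type*} [NormedAddCommGroup V] [InnerProductSpace ℝ V] (R : SimpleRS V)

lemma eq_of_sum_smul_eq {f g : V → ℝ}
    (h : ∑ α ∈ R.simple, f α • α = ∑ α ∈ R.simple, g α • α) {α : V} (hα : α ∈ R.simple) :
    f α = g α := by
  have h0 : ∑ i : R.simple, (f i - g i) • (i : V) = 0 := by
    rw [Finset.sum_coe_sort R.simple fun α => (f α - g α) • α]
    simp only [sub_smul, Finset.sum_sub_distrib, h, sub_self]
  exact sub_eq_zero.mp (Fintype.linearIndependent_iff.mp R.indep _ h0 ⟨α, hα⟩)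

lemma coeff_eq_of_eq_sum {γ : V} (hγ : γ ∈ R.pos) {f : V → ℝ}
    (h : γ = ∑ α ∈ R.simple, f α • α) {α : V} (hα : α ∈ R.simple) :
    (R.coeff γ α : ℝ) = f α :=
  R.eq_of_sum_smul_eq ((R.coeff_spec γ hγ).symm.trans h) hα

lemma inner_self_pos {γ : V} (hγ : γ ∈ R.pos) : 0 < ⟪γ, γ⟫ :=
  real_inner_self_pos.mpr (R.root_ne γ hγ)

lemma exists_int_pairing {γ α : V} (hγ : γ ∈ R.pos) (hα : α ∈ R.pos) :
    ∃ z : ℤ, 2 * ⟪γ, α⟫ = z * ⟪α, α⟫ := by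
  obtain ⟨z, hz⟩ := R.crystallographic α hα γ hγ
  exact ⟨z, by rw [← hz, div_mul_cancel₀ _ (R.inner_self_pos hα).ne']⟩

lemma sub_smul_mem_or_neg_mem {γ α : V} (hγ : γ ∈ R.pos) (hα : α ∈ R.pos) {z : ℤ}
    (hz : 2 * ⟪γ, α⟫ = z * ⟪α, α⟫) :
    γ - (z : ℝ) • α ∈ R.pos ∨ -(γ - (z : ℝ) • α) ∈ R.pos := by
  have hz' : 2 * ⟪γ, α⟫ / ⟪α, α⟫ = z := by
    rw [hz, mul_div_cancel_right₀ _ (R.inner_self_pos hα).ne']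
  simpa only [hz'] using R.reflect_mem α hα γ hγ

lemma inner_self_sub_smul {γ α : V} {z : ℝ} (hz : 2 * ⟪γ, α⟫ = z * ⟪α, α⟫) :
    ⟪γ - z • α, γ - z • α⟫ = ⟪γ, γ⟫ := by
  simp only [inner_sub_left, inner_sub_right, real_inner_smul_left, real_inner_smul_right,
    real_inner_comm γ α]
  linear_combination (-z) * hz

-- Real rather than natural coefficients, so that the cone is closed under scaling by `t ≥ 0`.
def IsNonneg (v : V) : Prop :=
  ∃ f : V → ℝ, (∀ α ∈ R.simple, 0 ≤ f α) ∧ v = ∑ α ∈ R.simple, f α • α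

variable {R}

lemma isNonneg_of_mem {γ : V} (hγ : γ ∈ R.pos) : R.IsNonneg γ :=
  ⟨fun α => R.coeff γ α, fun _ _ => Nat.cast_nonneg _, R.coeff_spec γ hγ⟩

lemma rle.isNonneg_sub {μ ν : V} (h : R.rle μ ν) : R.IsNonneg (ν - μ) := by
  obtain ⟨c, hc⟩ := h
  exact ⟨fun α => c α, fun _ _ => Nat.cast_nonneg _, hc⟩

namespace IsNonneg

lemma add {v w : V} (hv : R.IsNonneg v) (hw : R.IsNonneg w) : R.IsNonneg (v + w) := by
  obtain ⟨f, hf, rfl⟩ := hv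
  obtain ⟨g, hg, rfl⟩ := hw
  exact ⟨f + g, fun α hα => add_nonneg (hf α hα) (hg α hα),
    by simp only [Pi.add_apply, add_smul, Finset.sum_add_distrib]⟩

lemma smul {v : V} (hv : R.IsNonneg v) {t : ℝ} (ht : 0 ≤ t) : R.IsNonneg (t • v) := by
  obtain ⟨f, hf, rfl⟩ := hv
  exact ⟨t • f, fun α hα => mul_nonneg ht (hf α hα),
    by simp only [Finset.smul_sum, Pi.smul_apply, smul_eq_mul, mul_smul]⟩

lemma eq_zero_of_neg {v : V} (hv : R.IsNonneg v) (hv' : R.IsNonneg (-v)) : v = 0 := by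
  obtain ⟨f, hf, rfl⟩ := hv
  obtain ⟨g, hg, hfg⟩ := hv'
  have h : ∑ α ∈ R.simple, (-f α) • α = ∑ α ∈ R.simple, g α • α := by
    simpa only [neg_smul, Finset.sum_neg_distrib] using hfg
  refine Finset.sum_eq_zero fun α hα => ?_
  have := R.eq_of_sum_smul_eq h hα
  rw [show f α = 0 by linarith [hf α hα, hg α hα], zero_smul]

lemma neg_notMem_pos {v : V} (hv : R.IsNonneg v) : -v ∉ R.pos := fun h =>
  R.root_ne _ h (by rw [hv.eq_zero_of_neg (isNonneg_of_mem h), neg_zero])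

lemma exists_eq_smul {v α : V} (hv : R.IsNonneg v) (hα : α ∈ R.simple) {t : ℝ}
    (h : R.IsNonneg (t • α - v)) : ∃ s : ℝ, v = s • α := by
  classical
  obtain ⟨f, hf, rfl⟩ := hv
  obtain ⟨g, hg, hfg⟩ := h
  have hsum : ∑ β ∈ R.simple, (f β + g β) • β
      = ∑ β ∈ R.simple, (if β = α then t else 0) • β := by
    simp only [add_smul, Finset.sum_add_distrib, ← hfg, ite_smul, zero_smul,
      Finset.sum_ite_eq', if_pos hα]
    abel
  refine ⟨f α, Finset.sum_eq_single α (fun β hβ hne => ?_) (absurd hα)⟩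
  have := R.eq_of_sum_smul_eq hsum hβ
  rw [if_neg hne] at this
  rw [show f β = 0 by linarith [hf β hβ, hg β hβ], zero_smul]

lemma inner_nonneg {v x : V} (hv : R.IsNonneg v) (hx : ∀ α ∈ R.simple, 0 ≤ ⟪x, α⟫) :
    0 ≤ ⟪x, v⟫ := by
  obtain ⟨f, hf, rfl⟩ := hv
  rw [inner_sum]
  exact Finset.sum_nonneg fun α hα => by
    rw [real_inner_smul_right]; exact mul_nonneg (hf α hα) (hx α hα)

lemma exists_inner_neg {v x : V} (hv : R.IsNonneg v) (h : ⟪x, v⟫ < 0) :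
    ∃ α ∈ R.simple, ⟪x, α⟫ < 0 := by
  by_contra! hx
  exact h.not_ge (hv.inner_nonneg hx)

end IsNonneg

lemma not_isNonneg_smul_of_neg {γ : V} (hγ : γ ∈ R.pos) {t : ℝ} (ht : t < 0) :
    ¬ R.IsNonneg (t • γ) := fun h => by
  have hneg := h.smul (inv_nonneg.mpr (neg_nonneg.mpr ht.le))
  rw [smul_smul, inv_mul_eq_div, div_neg, div_self ht.ne, neg_one_smul] at hneg
  exact hneg.neg_notMem_pos (by rwa [neg_neg])

lemma eq_of_eq_smul {γ δ : V} (hγ : γ ∈ R.pos) (hδ : δ ∈ R.pos) {s : ℝ} (h : γ = s • δ) :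
    γ = δ := by
  have hs : 0 < s := by
    by_contra! hs
    rcases hs.lt_or_eq with hs | rfl
    · exact not_isNonneg_smul_of_neg hδ hs (h ▸ isNonneg_of_mem hγ)
    · exact R.root_ne γ hγ (by rw [h, zero_smul])
  obtain ⟨z, hz⟩ := R.exists_int_pairing hγ hδ
  obtain ⟨w, hw⟩ := R.exists_int_pairing hδ hγ
  have hδδ := R.inner_self_pos hδ
  subst h
  simp only [real_inner_smul_left, real_inner_smul_right] at hz hw
  have hz' : (z : ℝ) = 2 * s := mul_right_cancel₀ hδδ.ne' (by linarith)
  have hw' : (w : ℝ) * s = 2 := mul_right_cancel₀ (mul_pos hs hδδ).ne' (by linarith)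
  have hzw : z * w = 4 := by
    exact_mod_cast (by rw [Int.cast_mul, hz']; linarith : ((z * w : ℤ) : ℝ) = 4)
  have hw0 : 0 < w := by exact_mod_cast (by nlinarith : (0 : ℝ) < w)
  have hz4 : z ≤ 4 := by nlinarith
  have hz0 : 0 < z := by nlinarith
  -- `z = 2s` and `zw = 4` leave `s ∈ {1/2, 1, 2}`; reducedness excludes `1/2` and `2`.
  interval_cases z <;> push_cast at hz'
  · have h2s : (2 : ℝ) • s • δ = δ := by rw [smul_smul, ← hz', one_smul]
    exact absurd (by rwa [h2s]) (R.reduced _ hγ)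
  · rw [show s = 1 by linarith, one_smul]
  · omega
  · exact absurd (by rwa [show s = 2 by linarith] at hγ) (R.reduced δ hδ)

lemma inner_sq_lt {γ δ : V} (hγ : γ ∈ R.pos) (hδ : δ ∈ R.pos) (hne : γ ≠ δ) :
    ⟪γ, δ⟫ ^ 2 < ⟪γ, γ⟫ * ⟪δ, δ⟫ := by
  have hlt : |⟪γ, δ⟫| < ‖γ‖ * ‖δ‖ := by
    refine (abs_real_inner_le_norm γ δ).lt_of_ne fun h => ?_
    obtain ⟨r, -, hr⟩ :=
      (norm_inner_eq_norm_iff (𝕜 := ℝ) (R.root_ne γ hγ) (R.root_ne δ hδ)).mp h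
    exact hne (R.eq_of_eq_smul hδ hγ hr).symm
  rw [real_inner_self_eq_norm_sq, real_inner_self_eq_norm_sq, ← mul_pow, ← sq_abs]
  exact pow_lt_pow_left₀ hlt (abs_nonneg _) two_ne_zero

lemma int_pairing_mul_le_three {γ δ : V} (hγ : γ ∈ R.pos) (hδ : δ ∈ R.pos) (hne : γ ≠ δ)
    {z w : ℤ} (hz : 2 * ⟪γ, δ⟫ = z * ⟪δ, δ⟫) (hw : 2 * ⟪δ, γ⟫ = w * ⟪γ, γ⟫) : z * w ≤ 3 := by
  rw [real_inner_comm] at hw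
  have hzw : ((z * w : ℤ) : ℝ) * (⟪γ, γ⟫ * ⟪δ, δ⟫) = 4 * ⟪γ, δ⟫ ^ 2 := by
    push_cast
    linear_combination (-(2 * ⟪γ, δ⟫)) * hz - (z * ⟪δ, δ⟫) * hw
  have : ((z * w : ℤ) : ℝ) < 4 := by
    nlinarith [R.inner_sq_lt hγ hδ hne, mul_pos (R.inner_self_pos hγ) (R.inner_self_pos hδ)]
  exact Int.lt_add_one_iff.mp (by exact_mod_cast this)

lemma int_pairing_le_three {γ α : V} (hγ : γ ∈ R.pos) (hα : α ∈ R.pos) {z : ℤ}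
    (hz : 2 * ⟪γ, α⟫ = z * ⟪α, α⟫) : z ≤ 3 := by
  have hαα := R.inner_self_pos hα
  rcases eq_or_ne γ α with rfl | hne
  · exact_mod_cast (by nlinarith : (z : ℝ) ≤ 3)
  obtain ⟨w, hw⟩ := R.exists_int_pairing hα hγ
  rcases le_or_gt z 0 with hz0 | hz0
  · omega
  have hw0 : 0 < w := by
    have : (0 : ℝ) < w := by
      rw [real_inner_comm] at hw
      nlinarith [R.inner_self_pos hγ, (Int.cast_pos.mpr hz0 : (0 : ℝ) < z)]
    exact_mod_cast this
  nlinarith [R.int_pairing_mul_le_three hγ hα hne hz hw]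

lemma sub_mem_or_sub_mem {γ δ : V} (hγ : γ ∈ R.pos) (hδ : δ ∈ R.pos) (hne : γ ≠ δ)
    (hpos : 0 < ⟪γ, δ⟫) : γ - δ ∈ R.pos ∨ δ - γ ∈ R.pos := by
  obtain ⟨z, hz⟩ := R.exists_int_pairing hγ hδ
  obtain ⟨w, hw⟩ := R.exists_int_pairing hδ hγ
  have hz0 : 0 < z := by
    exact_mod_cast (by nlinarith [R.inner_self_pos hδ] : (0 : ℝ) < z)
  have hw0 : 0 < w := by
    rw [real_inner_comm] at hw
    exact_mod_cast (by nlinarith [R.inner_self_pos hγ] : (0 : ℝ) < w)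
  have hzw := R.int_pairing_mul_le_three hγ hδ hne hz hw
  obtain rfl | rfl : z = 1 ∨ w = 1 := by
    by_contra! h
    nlinarith [lt_of_le_of_ne hz0 h.1.symm, lt_of_le_of_ne hw0 h.2.symm]
  · simpa [neg_sub] using R.sub_smul_mem_or_neg_mem hγ hδ hz
  · simpa [neg_sub, or_comm] using R.sub_smul_mem_or_neg_mem hδ hγ hw

lemma eq_of_isNonneg_smul_sub {γ α : V} (hγ : γ ∈ R.pos) (hα : α ∈ R.simple) {t : ℝ}
    (h : R.IsNonneg (t • α - γ)) : γ = α := by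
  obtain ⟨s, hs⟩ := (isNonneg_of_mem hγ).exists_eq_smul hα h
  exact R.eq_of_eq_smul hγ (R.simple_sub hα) hs

lemma sub_smul_simple_mem {γ α : V} (hγ : γ ∈ R.pos) (hα : α ∈ R.simple) (hne : γ ≠ α)
    {z : ℤ} (hz : 2 * ⟪γ, α⟫ = z * ⟪α, α⟫) : γ - (z : ℝ) • α ∈ R.pos :=
  (R.sub_smul_mem_or_neg_mem hγ (R.simple_sub hα) hz).resolve_right fun h =>
    hne (R.eq_of_isNonneg_smul_sub hγ hα (by simpa only [neg_sub] using isNonneg_of_mem h))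

lemma sub_simple_mem {γ α : V} (hγ : γ ∈ R.pos) (hα : α ∈ R.simple) (hne : γ ≠ α)
    (hpos : 0 < ⟪γ, α⟫) : γ - α ∈ R.pos :=
  (R.sub_mem_or_sub_mem hγ (R.simple_sub hα) hne hpos).resolve_right fun h =>
    hne (R.eq_of_isNonneg_smul_sub hγ hα (t := 1)
      (by simpa only [one_smul] using isNonneg_of_mem h))

lemma sub_smul_mem_of_nonpos {γ α : V} (hγ : γ ∈ R.pos) (hα : α ∈ R.pos) {z : ℤ}
    (hz0 : z ≤ 0) (hz : 2 * ⟪γ, α⟫ = z * ⟪α, α⟫) : γ - (z : ℝ) • α ∈ R.pos := by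
  refine (R.sub_smul_mem_or_neg_mem hγ hα hz).resolve_right ?_
  have : R.IsNonneg (γ + (-(z : ℝ)) • α) :=
    (isNonneg_of_mem hγ).add ((isNonneg_of_mem hα).smul (by simp [hz0]))
  simpa only [neg_smul, ← sub_eq_add_neg] using this.neg_notMem_pos

lemma sub_two_smul_mem_or_neg_mem {γ α : V} (hγ : γ ∈ R.pos) (hα : α ∈ R.pos)
    (hsub : γ - α ∈ R.pos) {z : ℤ} (hz : 2 * ⟪γ, α⟫ = z * ⟪α, α⟫) (hz23 : z = 2 ∨ z = 3) :
    γ - (2 : ℝ) • α ∈ R.pos ∨ -(γ - (2 : ℝ) • α) ∈ R.pos := by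
  rcases hz23 with rfl | rfl
  · exact_mod_cast R.sub_smul_mem_or_neg_mem hγ hα hz
  · have h1 : 2 * ⟪γ - α, α⟫ = ((1 : ℤ) : ℝ) * ⟪α, α⟫ := by
      rw [inner_sub_left]; push_cast at hz ⊢; linarith
    simpa only [Int.cast_one, one_smul, sub_sub, ← two_smul ℝ α] using
      R.sub_smul_mem_or_neg_mem hsub hα h1

lemma sub_two_smul_simple_mem {γ α : V} (hγ : γ ∈ R.pos) (hα : α ∈ R.simple) (hne : γ ≠ α)
    {z : ℤ} (hz : 2 * ⟪γ, α⟫ = z * ⟪α, α⟫) (hz2 : 2 ≤ z) : γ - (2 : ℝ) • α ∈ R.pos := by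
  have hαpos := R.simple_sub hα
  have hsub : γ - α ∈ R.pos := R.sub_simple_mem hγ hα hne <| by
    nlinarith [R.inner_self_pos hαpos, (by exact_mod_cast hz2 : (2 : ℝ) ≤ z)]
  have hz3 := R.int_pairing_le_three hγ hαpos hz
  exact (R.sub_two_smul_mem_or_neg_mem hγ hαpos hsub hz (by omega)).resolve_right fun h =>
    hne (R.eq_of_isNonneg_smul_sub hγ hα (by simpa only [neg_sub] using isNonneg_of_mem h))

lemma isNonneg_highest_sub {γ : V} (hγ : γ ∈ R.pos) : R.IsNonneg (R.highest - γ) :=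
  rle.isNonneg_sub (R.highest_spec γ hγ)

lemma inner_highest_simple_nonneg {α : V} (hα : α ∈ R.simple) : 0 ≤ ⟪R.highest, α⟫ := by
  by_contra! h
  have hαpos := R.simple_sub hα
  obtain ⟨z, hz⟩ := R.exists_int_pairing R.highest_mem hαpos
  have hz0 : (z : ℝ) < 0 := by nlinarith [R.inner_self_pos hαpos]
  have hmem := R.sub_smul_mem_of_nonpos R.highest_mem hαpos (by exact_mod_cast hz0.le) hz
  have hnonneg := isNonneg_highest_sub hmem
  rw [sub_sub_cancel] at hnonneg
  exact not_isNonneg_smul_of_neg hαpos hz0 hnonneg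

lemma inner_highest_nonneg {γ : V} (hγ : γ ∈ R.pos) : 0 ≤ ⟪R.highest, γ⟫ :=
  (isNonneg_of_mem hγ).inner_nonneg fun _ hα => R.inner_highest_simple_nonneg hα

lemma eq_highest_of_le_inner {γ : V} (hγ : γ ∈ R.pos)
    (h : ⟪R.highest, R.highest⟫ ≤ ⟪γ, R.highest⟫) : γ = R.highest := by
  have hθ := R.highest_mem
  obtain ⟨z, hz⟩ := R.exists_int_pairing hγ hθ
  have hz2 : (2 : ℝ) ≤ z := by nlinarith [R.inner_self_pos hθ]
  have hle := isNonneg_highest_sub hγ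
  rcases R.sub_smul_mem_or_neg_mem hγ hθ hz with hmem | hmem
  · have h1 := (isNonneg_of_mem hmem).add hle
    rw [show γ - (z : ℝ) • R.highest + (R.highest - γ) = (1 - z : ℝ) • R.highest by module]
      at h1
    exact absurd h1 (not_isNonneg_smul_of_neg hθ (by linarith))
  · rw [neg_sub] at hmem
    have h1 := isNonneg_highest_sub hmem
    rcases hz2.lt_or_eq with hlt | heq
    · have h2 := h1.add hle
      rw [show R.highest - ((z : ℝ) • R.highest - γ) + (R.highest - γ)
        = (2 - z : ℝ) • R.highest by module] at h2
      exact absurd h2 (not_isNonneg_smul_of_neg hθ (by linarith))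
    · rw [← heq, show R.highest - ((2 : ℝ) • R.highest - γ) = -(R.highest - γ) by module] at h1
      exact (sub_eq_zero.mp (hle.eq_zero_of_neg h1)).symm

lemma ht_sub_smul {γ α : V} (hγ : γ ∈ R.pos) (hα : α ∈ R.simple) {t : ℝ}
    (hmem : γ - t • α ∈ R.pos) : (R.ht (γ - t • α) : ℝ) = R.ht γ - t := by
  classical
  have hsum : γ - t • α
      = ∑ β ∈ R.simple, ((R.coeff γ β : ℝ) - if β = α then t else 0) • β := by
    simp only [sub_smul, Finset.sum_sub_distrib, ite_smul, zero_smul, Finset.sum_ite_eq',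
      if_pos hα, ← R.coeff_spec γ hγ]
  simp only [ht, Nat.cast_sum]
  rw [Finset.sum_congr rfl fun β hβ => R.coeff_eq_of_eq_sum hmem hsum hβ,
    Finset.sum_sub_distrib, Finset.sum_ite_eq', if_pos hα]

lemma exists_ht_lt_of_inner_highest_nonpos {γ : V} (hγ : γ ∈ R.pos)
    (h : ⟪R.highest, γ⟫ ≤ 0) : ∃ γ' ∈ R.pos, ⟪γ', γ'⟫ = ⟪γ, γ⟫ ∧ R.ht γ < R.ht γ' := by
  have hneg : ⟪γ, R.highest - γ⟫ < 0 := by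
    rw [inner_sub_right, real_inner_comm R.highest γ]; linarith [R.inner_self_pos hγ]
  obtain ⟨α, hα, hγα⟩ := (isNonneg_highest_sub hγ).exists_inner_neg hneg
  have hαpos := R.simple_sub hα
  obtain ⟨z, hz⟩ := R.exists_int_pairing hγ hαpos
  have hz0 : (z : ℝ) < 0 := by nlinarith [R.inner_self_pos hαpos]
  have hmem := R.sub_smul_mem_of_nonpos hγ hαpos (by exact_mod_cast hz0.le) hz
  refine ⟨_, hmem, inner_self_sub_smul hz, ?_⟩
  exact_mod_cast (by rw [R.ht_sub_smul hγ hα hmem]; linarith :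
    (R.ht γ : ℝ) < R.ht (γ - (z : ℝ) • α))

lemma exists_inner_highest_pos {P : ℝ → Prop} (h : ∃ γ ∈ R.pos, P ⟪γ, γ⟫) :
    ∃ γ ∈ R.pos, P ⟪γ, γ⟫ ∧ 0 < ⟪R.highest, γ⟫ := by
  classical
  obtain ⟨γ, hγ, hγmax⟩ := Finset.exists_max_image (R.pos.filter fun γ => P ⟪γ, γ⟫) R.ht
    (by simpa only [Finset.filter_nonempty_iff] using h)
  rw [Finset.mem_filter] at hγ
  refine ⟨γ, hγ.1, hγ.2, lt_of_not_ge fun hle => ?_⟩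
  obtain ⟨γ', hγ', hnorm, hht⟩ := R.exists_ht_lt_of_inner_highest_nonpos hγ.1 hle
  exact (hγmax γ' (Finset.mem_filter.mpr ⟨hγ', hnorm ▸ hγ.2⟩)).not_gt hht

lemma inner_self_le_highest {γ : V} (hγ : γ ∈ R.pos) :
    ⟪γ, γ⟫ ≤ ⟪R.highest, R.highest⟫ := by
  by_contra! hlong
  obtain ⟨δ, hδ, hδlong, hθδ⟩ :=
    R.exists_inner_highest_pos (P := (⟪R.highest, R.highest⟫ < ·)) ⟨γ, hγ, hlong⟩
  have hT := R.inner_self_pos R.highest_mem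
  obtain ⟨z, hz⟩ := R.exists_int_pairing hδ R.highest_mem
  obtain ⟨w, hw⟩ := R.exists_int_pairing R.highest_mem hδ
  rw [real_inner_comm] at hz
  have hw0 : 0 < w := by exact_mod_cast (by nlinarith : (0 : ℝ) < w)
  have hwz : w < z := by
    have := mul_lt_mul_of_pos_left hδlong (Int.cast_pos.mpr hw0 : (0 : ℝ) < w)
    exact_mod_cast (by nlinarith : (w : ℝ) < z)
  have hz2 : (2 : ℝ) ≤ z := by exact_mod_cast (by omega : 2 ≤ z)
  have := R.eq_highest_of_le_inner hδ (by rw [real_inner_comm R.highest δ]; nlinarith)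
  exact hδlong.ne (by rw [this])

lemma exists_inner_self_lt_highest (hSL : ¬ R.SimplyLaced) :
    ∃ σ ∈ R.pos, ⟪σ, σ⟫ < ⟪R.highest, R.highest⟫ := by
  by_contra! h
  refine hSL fun α hα β hβ => ?_
  rw [norm_eq_sqrt_real_inner, norm_eq_sqrt_real_inner,
    le_antisymm (R.inner_self_le_highest hα) (h α hα),
    le_antisymm (R.inner_self_le_highest hβ) (h β hβ)]

lemma highest_sub_mem {σ : V} (hσ : σ ∈ R.pos) (hne : σ ≠ R.highest)
    (hpos : 0 < ⟪R.highest, σ⟫) : R.highest - σ ∈ R.pos :=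
  (R.sub_mem_or_sub_mem R.highest_mem hσ hne.symm hpos).resolve_right fun h =>
    (isNonneg_highest_sub hσ).neg_notMem_pos (by rwa [neg_sub])

variable (R) in
structure HighestSplit (β γ : V) : Prop where
  left_mem : β ∈ R.pos
  right_mem : γ ∈ R.pos
  two_smul_add : (2 : ℝ) • β + γ = R.highest

namespace HighestSplit

variable {β γ : V}

lemma inner_highest (hp : R.HighestSplit β γ) (x : V) :
    ⟪R.highest, x⟫ = 2 * ⟪β, x⟫ + ⟪γ, x⟫ := by
  rw [← hp.two_smul_add, inner_add_left, real_inner_smul_left]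

lemma inner_highest_right (hp : R.HighestSplit β γ) : ⟪R.highest, γ⟫ = 0 := by
  have hθ := R.highest_mem
  have hT := hp.inner_highest R.highest
  have hγθ := R.inner_highest_nonneg hp.right_mem
  rw [real_inner_comm γ R.highest] at hγθ ⊢
  obtain ⟨k, hk⟩ := R.exists_int_pairing hp.left_mem hθ
  rcases le_or_gt k 0 with hk0 | hk0
  · have hγ := R.eq_highest_of_le_inner hp.right_mem <| by
      nlinarith [R.inner_self_pos hθ, (Int.cast_nonpos.mpr hk0 : (k : ℝ) ≤ 0)]
    have h2β : (2 : ℝ) • β = 0 := by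
      simpa only [hγ, add_eq_right] using hp.two_smul_add
    exact absurd ((smul_eq_zero.mp h2β).resolve_left two_ne_zero) (R.root_ne β hp.left_mem)
  · have hk1 : (1 : ℝ) ≤ k := by exact_mod_cast hk0
    nlinarith [R.inner_self_pos hθ]

lemma inner_neg (hp : R.HighestSplit β γ) : ⟪β, γ⟫ < 0 := by
  linarith [hp.inner_highest γ, hp.inner_highest_right, R.inner_self_pos hp.right_mem]

lemma two_mul_int_pairing_add_nonneg (hp : R.HighestSplit β γ) {α : V} (hα : α ∈ R.simple)
    {b g : ℤ} (hb : 2 * ⟪β, α⟫ = b * ⟪α, α⟫) (hg : 2 * ⟪γ, α⟫ = g * ⟪α, α⟫) :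
    0 ≤ 2 * b + g := by
  have h : (0 : ℝ) ≤ (2 * b + g) * ⟪α, α⟫ := by
    linarith [hp.inner_highest α, R.inner_highest_simple_nonneg hα]
  exact_mod_cast (mul_nonneg_iff_of_pos_right (R.inner_self_pos (R.simple_sub hα))).mp h

lemma add_mem (hp : R.HighestSplit β γ) {α : V} (hα : α ∈ R.simple) (hβα : ⟪β, α⟫ < 0) :
    β + α ∈ R.pos := by
  have hαpos := R.simple_sub hα
  have hαα := R.inner_self_pos hαpos
  obtain ⟨b, hb⟩ := R.exists_int_pairing hp.left_mem hαpos
  obtain ⟨g, hg⟩ := R.exists_int_pairing hp.right_mem hαpos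
  have hb0 : b < 0 := by exact_mod_cast (by nlinarith : (b : ℝ) < 0)
  have := hp.two_mul_int_pairing_add_nonneg hα hb hg
  have := R.int_pairing_le_three hp.right_mem hαpos hg
  obtain rfl : b = -1 := by omega
  have hne : β ≠ α := by rintro rfl; linarith
  simpa using R.sub_smul_simple_mem hp.left_mem hα hne hb

lemma exists_ht_lt (hp : R.HighestSplit β γ) (hγ : γ ∉ R.simple) :
    ∃ β' γ', R.HighestSplit β' γ' ∧ R.ht γ' < R.ht γ := by
  obtain ⟨α, hα, hβα⟩ := (isNonneg_of_mem hp.right_mem).exists_inner_neg hp.inner_neg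
  have hαpos := R.simple_sub hα
  obtain ⟨b, hb⟩ := R.exists_int_pairing hp.left_mem hαpos
  obtain ⟨g, hg⟩ := R.exists_int_pairing hp.right_mem hαpos
  have hb0 : b < 0 := by
    exact_mod_cast (by nlinarith [R.inner_self_pos hαpos] : (b : ℝ) < 0)
  have hg2 : 2 ≤ g := by have := hp.two_mul_int_pairing_add_nonneg hα hb hg; omega
  have hγ' := R.sub_two_smul_simple_mem hp.right_mem hα (fun h => hγ (h ▸ hα)) hg hg2
  refine ⟨β + α, γ - (2 : ℝ) • α, ⟨hp.add_mem hα hβα, hγ', ?_⟩, ?_⟩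
  · rw [← hp.two_smul_add]; module
  · exact_mod_cast (by rw [R.ht_sub_smul hp.right_mem hα hγ']; linarith :
      (R.ht (γ - (2 : ℝ) • α) : ℝ) < R.ht γ)

end HighestSplit

lemma exists_highestSplit (hSL : ¬ R.SimplyLaced) : ∃ β γ, R.HighestSplit β γ := by
  have hθ := R.highest_mem
  obtain ⟨σ, hσ, hσshort, hθσ⟩ := R.exists_inner_highest_pos
    (P := (· < ⟪R.highest, R.highest⟫)) (R.exists_inner_self_lt_highest hSL)
  have hne : σ ≠ R.highest := by rintro rfl; exact lt_irrefl _ hσshort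
  obtain ⟨z, hz⟩ := R.exists_int_pairing hθ hσ
  obtain ⟨w, hw⟩ := R.exists_int_pairing hσ hθ
  rw [real_inner_comm] at hw
  -- `σ` is shorter than `θ`, so `0 < w < z`; with `z ≤ 3` this leaves `z ∈ {2, 3}`.
  have hw0 : 0 < w := by exact_mod_cast (by nlinarith [R.inner_self_pos hθ] : (0 : ℝ) < w)
  have hwz : w < z := by
    have := mul_lt_mul_of_pos_left hσshort (Int.cast_pos.mpr hw0 : (0 : ℝ) < w)
    exact_mod_cast (by nlinarith [R.inner_self_pos hσ] : (w : ℝ) < z)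
  have hz3 := R.int_pairing_le_three hθ hσ hz
  have hθσ' := R.highest_sub_mem hσ hne hθσ
  rcases R.sub_two_smul_mem_or_neg_mem hθ hσ hθσ' hz (by omega) with h | h
  · exact ⟨σ, _, hσ, h, by module⟩
  · exact ⟨R.highest - σ, _, hθσ', h, by module⟩

lemma exists_highestSplit_simple (hSL : ¬ R.SimplyLaced) :
    ∃ β α, α ∈ R.simple ∧ R.HighestSplit β α := by
  classical
  obtain ⟨β₀, γ₀, hp₀⟩ := R.exists_highestSplit hSL
  obtain ⟨γ, hγ, hγmin⟩ := Finset.exists_min_image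
    (R.pos.filter fun γ => ∃ β, R.HighestSplit β γ) R.ht
    ⟨γ₀, Finset.mem_filter.mpr ⟨hp₀.right_mem, β₀, hp₀⟩⟩
  obtain ⟨-, β, hp⟩ := Finset.mem_filter.mp hγ
  by_contra! hno
  obtain ⟨β', γ', hp', hlt⟩ := hp.exists_ht_lt (hno β γ · hp)
  exact (hγmin γ' (Finset.mem_filter.mpr ⟨hp'.right_mem, β', hp'⟩)).not_gt hlt

lemma rle_refl (μ : V) : R.rle μ μ := ⟨0, by simp⟩

lemma rle_add_simple {μ α : V} (hα : α ∈ R.simple) : R.rle μ (μ + α) := by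
  classical
  exact ⟨fun β => if β = α then 1 else 0, by simp [Finset.sum_ite_eq', hα]⟩

lemma eq_or_eq_add_of_rle {μ γ α : V} (hα : α ∈ R.simple) (h₁ : R.rle μ γ)
    (h₂ : R.rle γ (μ + α)) : γ = μ ∨ γ = μ + α := by
  classical
  obtain ⟨c, hc⟩ := h₁
  obtain ⟨d, hd⟩ := h₂
  have hsum : ∑ β ∈ R.simple, ((c β + d β : ℕ) : ℝ) • β
      = ∑ β ∈ R.simple, ((if β = α then 1 else 0 : ℕ) : ℝ) • β := by
    simp only [Nat.cast_add, add_smul, Finset.sum_add_distrib, ← hc, ← hd, Nat.cast_ite,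
      Nat.cast_one, Nat.cast_zero, ite_smul, one_smul, zero_smul, Finset.sum_ite_eq',
      if_pos hα]
    abel
  have hcd : ∀ β ∈ R.simple, c β + d β = if β = α then 1 else 0 := fun β hβ => by
    exact_mod_cast R.eq_of_sum_smul_eq hsum hβ
  have hγμ : γ - μ = (c α : ℝ) • α := by
    refine hc.trans (Finset.sum_eq_single α (fun β hβ hne => ?_) (absurd hα))
    have := hcd β hβ
    rw [if_neg hne] at this
    rw [show c β = 0 by omega, Nat.cast_zero, zero_smul]
  have hα1 := hcd α hα
  rw [if_pos rfl] at hα1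
  rcases (by omega : c α = 0 ∨ c α = 1) with h | h
  · rw [h, Nat.cast_zero, zero_smul, sub_eq_zero] at hγμ
    exact Or.inl hγμ
  · rw [h, Nat.cast_one, one_smul, sub_eq_iff_eq_add'] at hγμ
    exact Or.inr hγμ

lemma setOf_rle_rle_eq_pair {μ α : V} (hα : α ∈ R.simple) (hμ : μ ∈ R.pos)
    (hμα : μ + α ∈ R.pos) :
    {γ : V | γ ∈ R.pos ∧ R.rle μ γ ∧ R.rle γ (μ + α)} = {μ, μ + α} := by
  ext γ
  constructor
  · rintro ⟨-, h₁, h₂⟩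
    exact R.eq_or_eq_add_of_rle hα h₁ h₂
  · rintro (rfl | rfl)
    · exact ⟨hμ, R.rle_refl _, R.rle_add_simple hα⟩
    · exact ⟨hμα, R.rle_add_simple hα, R.rle_refl _⟩

namespace HighestSplit

variable {β α : V}

lemma coeff_highest [DecidableEq V] (hp : R.HighestSplit β α) (hα : α ∈ R.simple) {δ : V}
    (hδ : δ ∈ R.simple) : R.coeff R.highest δ = 2 * R.coeff β δ + if δ = α then 1 else 0 := by
  have hsum : R.highest
      = ∑ δ ∈ R.simple, ((2 * R.coeff β δ + if δ = α then 1 else 0 : ℕ) : ℝ) • δ := by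
    simp only [Nat.cast_add, Nat.cast_mul, Nat.cast_ofNat, Nat.cast_ite, Nat.cast_one,
      Nat.cast_zero, add_smul, mul_smul, Finset.sum_add_distrib, ← Finset.smul_sum,
      ← R.coeff_spec β hp.left_mem, ite_smul, one_smul, zero_smul, Finset.sum_ite_eq',
      if_pos hα, hp.two_smul_add]
  exact_mod_cast R.coeff_eq_of_eq_sum R.highest_mem hsum hδ

lemma floorTheta_eq (hp : R.HighestSplit β α) (hα : α ∈ R.simple) : R.floorTheta = β := by
  classical
  rw [R.coeff_spec β hp.left_mem, floorTheta]
  refine Finset.sum_congr rfl fun δ hδ => ?_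
  rw [hp.coeff_highest hα hδ]
  congr 2
  split_ifs <;> omega

lemma two_mul_sum_sub_half_coeff_highest (hp : R.HighestSplit β α) (hα : α ∈ R.simple) :
    2 * ∑ δ ∈ R.simple, (R.coeff R.highest δ - R.coeff R.highest δ / 2)
      = R.ht R.highest + 1 := by
  classical
  have hceil : ∀ δ ∈ R.simple, R.coeff R.highest δ - R.coeff R.highest δ / 2
      = R.coeff β δ + if δ = α then 1 else 0 := fun δ hδ => by
    rw [hp.coeff_highest hα hδ]; split_ifs <;> omega
  rw [ht, Finset.sum_congr rfl hceil, Finset.sum_congr rfl fun δ hδ => hp.coeff_highest hα hδ]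
  simp only [Finset.sum_add_distrib, ← Finset.mul_sum, Finset.sum_ite_eq', if_pos hα]
  ring

end HighestSplit

end SimpleRS

/-- for `Δ` irreducible and not simply laced (types `B`, `C`, `F₄`, `G₂`),
the interval `{γ ∈ Δ⁺ : ⌊θ/2⌋ ≼ γ ≼ ⌈θ/2⌉}` equals `{⌊θ/2⌋, ⌈θ/2⌉}`, and
`ht(⌈θ/2⌉) = h/2` (i.e. `2·ht(⌈θ/2⌉) = h`), where `h = ht(θ) + 1` is the Coxeter
number. -/
theorem stmt19 {V : Type*} [NormedAddCommGroup V] [InnerProductSpace ℝ V]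
    (R : SimpleRS V) (hSL : ¬ R.SimplyLaced) :
    ({γ : V | γ ∈ R.pos ∧ R.rle R.floorTheta γ ∧
        R.rle γ (R.highest - R.floorTheta)} : Set V) =
      {R.floorTheta, R.highest - R.floorTheta} ∧
    2 * (∑ α ∈ R.simple, (R.coeff R.highest α - R.coeff R.highest α / 2)) =
      R.ht R.highest + 1 := by
  obtain ⟨β, α, hα, hp⟩ := R.exists_highestSplit_simple hSL
  have hfloor : R.floorTheta = β := hp.floorTheta_eq hα
  have hceil : R.highest - R.floorTheta = β + α := by
    rw [hfloor, ← hp.two_smul_add]; module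
  refine ⟨?_, hp.two_mul_sum_sub_half_coeff_highest hα⟩
  rw [hceil, hfloor]
  exact R.setOf_rle_rle_eq_pair hα hp.left_mem (hp.add_mem hα hp.inner_neg)
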